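/- arXiv:1709.07621 — 2 statements merged into one kernel-verified Lean document; each statement's English description precedes it below -/
import Mathlib

section
/- Let m ≥ 1 be an integer and let Q : ℂ^m → [0,∞) be a multi-circular function of class C² such that Q(z) ≥ (1+ε₀) log‖z‖ for all sufficiently large ‖z‖, for some fixed ε₀ > 0. Let T = (t₁,…,t_m) ∈ [0,1]^m with t₁+⋯+t_m ≤ 1. Then the integrals I_n := ∫_{ℂ^m} ∏_{j=1}^m |z_j|^{2 n t_j} e^{−2 n Q(z)} dV(z) are finite for all sufficiently large n, and lim_{n→∞} (1/(2n)) log I_n = sup_{r ∈ (0,∞)^m} ( ∑_{j=1}^m t_j log r_j − Q(r₁,…,r_m) ), this supremum being finite. -/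
/-!
Write `w(z) = |z^T|² e^{-2Q(z)}`, so that the integrand of `I_n` is `wⁿ`. The function `w` is
continuous, and on the dense set of points without zero coordinates multi-circularity gives
`w(z) = exp (2 (∑ tⱼ log |zⱼ| - Q(|z₁|, …, |z_m|)))`; hence `sup w = e^{2L}` with `L` the
supremum of the statement. The growth condition makes `w` bounded (so `L` is finite) and
`w(z) ≤ ‖z‖^{-2ε₀}` at infinity, so `wⁿ` is integrable as soon as `ε₀ n > m`.

The limit is then the elementary Laplace principle `(1/n) log ∫ wⁿ → log sup w`: from above,
`∫ wⁿ ≤ (sup w)^{n-n₀} ∫ w^{n₀}`; from below, `∫ wⁿ ≥ c^{n-n₀} ∫_{w > c} w^{n₀}` for every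
`c < sup w`, and the last integral is positive since `{w > c}` is a nonempty open set.
-/

open MeasureTheory Filter Set Topology

theorem prod_rpow_le_rpow_of_sum_le {ι : Type*} (s : Finset ι) {x w : ι → ℝ} {e c : ℝ}
    (hx0 : ∀ i ∈ s, 0 ≤ x i) (hxe : ∀ i ∈ s, x i ≤ e) (he : 1 ≤ e) (hw : ∀ i ∈ s, 0 ≤ w i)
    (hwc : ∑ i ∈ s, w i ≤ c) : ∏ i ∈ s, x i ^ w i ≤ e ^ c :=
  calc ∏ i ∈ s, x i ^ w i ≤ ∏ i ∈ s, e ^ w i :=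
        Finset.prod_le_prod (fun i hi => Real.rpow_nonneg (hx0 i hi) _)
          fun i hi => Real.rpow_le_rpow (hx0 i hi) (hxe i hi) (hw i hi)
    _ = e ^ ∑ i ∈ s, w i := (Real.rpow_sum_of_pos (zero_lt_one.trans_le he) _ _).symm
    _ ≤ e ^ c := Real.rpow_le_rpow_of_exponent_le he hwc

theorem norm_apply_le_sqrt_sum_sq {ι E : Type*} [Fintype ι] [SeminormedAddCommGroup E]
    (z : ι → E) (i : ι) : ‖z i‖ ≤ √(∑ j, ‖z j‖ ^ 2) :=
  Real.le_sqrt_of_sq_le <|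
    Finset.single_le_sum (f := fun j => ‖z j‖ ^ 2) (fun _ _ => sq_nonneg _) (Finset.mem_univ i)

theorem integrable_of_le_norm_rpow_neg {E : Type*} [NormedAddCommGroup E] [NormedSpace ℝ E]
    [FiniteDimensional ℝ E] [MeasurableSpace E] [BorelSpace E] {μ : Measure E}
    [μ.IsAddHaarMeasure] {f : E → ℝ} (hf : Continuous f) {q R : ℝ}
    (hq : (Module.finrank ℝ E : ℝ) < q) (hdecay : ∀ x, R ≤ ‖x‖ → ‖f x‖ ≤ ‖x‖ ^ (-q)) :
    Integrable f μ := by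
  have hq0 : 0 ≤ q := (Nat.cast_nonneg _).trans hq.le
  refine hf.locallyIntegrable.integrable_of_isBigO_cocompact (g := fun x => (1 + ‖x‖) ^ (-q))
    (Asymptotics.IsBigO.of_bound (2 ^ q) ?_)
    ((integrable_one_add_norm hq).integrableAtFilter _)
  filter_upwards [tendsto_norm_cocompact_atTop.eventually (eventually_ge_atTop (max R 1))]
    with x hx
  have hx1 : 1 ≤ ‖x‖ := (le_max_right R 1).trans hx
  calc ‖f x‖ ≤ ‖x‖ ^ (-q) := hdecay x ((le_max_left R 1).trans hx)
    _ ≤ ((1 + ‖x‖) / 2) ^ (-q) :=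
        Real.rpow_le_rpow_of_nonpos (by positivity) (by linarith) (neg_nonpos.2 hq0)
    _ = 2 ^ q * ‖(1 + ‖x‖) ^ (-q)‖ := by
        rw [Real.div_rpow (by positivity) zero_le_two, Real.rpow_neg zero_le_two,
          Real.norm_of_nonneg (by positivity), div_inv_eq_mul, mul_comm]

theorem tendsto_log_mul_pow_div {A c : ℝ} (hA : 0 < A) (hc : 0 < c) :
    Tendsto (fun n : ℕ => Real.log (A * c ^ n) / n) atTop (𝓝 (Real.log c)) := by
  have h := (tendsto_const_div_atTop_nhds_zero_nat (Real.log A)).add_const (Real.log c)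
  rw [zero_add] at h
  refine h.congr' ((eventually_ne_atTop 0).mono fun n hn => ?_)
  dsimp only
  rw [Real.log_mul hA.ne' (pow_ne_zero _ hc.ne'), Real.log_pow]
  field_simp

theorem tendsto_log_div_of_pow_bounds {u : ℕ → ℝ} {M : ℝ} (hM : 0 < M)
    (hup : ∃ B, ∀ᶠ n in atTop, u n ≤ B * M ^ n)
    (hlow : ∀ c ∈ Ioo 0 M, ∃ A > 0, ∀ᶠ n in atTop, A * c ^ n ≤ u n) :
    Tendsto (fun n => Real.log (u n) / n) atTop (𝓝 (Real.log M)) := by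
  obtain ⟨A₀, hA₀, hlow₀⟩ := hlow (M / 2) ⟨half_pos hM, half_lt_self hM⟩
  have hpos : ∀ᶠ n in atTop, 0 < u n :=
    hlow₀.mono fun n hn => (mul_pos hA₀ (pow_pos (half_pos hM) n)).trans_le hn
  refine tendsto_order.2 ⟨fun a ha => ?_, fun b hb => ?_⟩
  · obtain ⟨c', hac', hc'M⟩ := exists_between ha
    set c := Real.exp c'
    have hcM : c < M := by rwa [← Real.exp_lt_exp, Real.exp_log hM] at hc'M
    obtain ⟨A, hA, hAc⟩ := hlow c ⟨Real.exp_pos _, hcM⟩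
    filter_upwards [(tendsto_log_mul_pow_div hA (Real.exp_pos c')).eventually
      (lt_mem_nhds (by rwa [Real.log_exp])), hAc] with n hn hAn
    calc a < Real.log (A * c ^ n) / n := hn
      _ ≤ Real.log (u n) / n := by gcongr
  · obtain ⟨B, hB⟩ := hup
    have hB' : Tendsto (fun n : ℕ => Real.log (max B 1 * M ^ n) / n) atTop (𝓝 (Real.log M)) :=
      tendsto_log_mul_pow_div (zero_lt_one.trans_le (le_max_right B 1)) hM
    filter_upwards [hB'.eventually (gt_mem_nhds hb), hB, hpos] with n hn hBn hun
    calc Real.log (u n) / n ≤ Real.log (max B 1 * M ^ n) / n := by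
          gcongr
          exact hBn.trans (by gcongr; exact le_max_left B 1)
      _ < b := hn

section PowIntegrals

variable {X : Type*} [MeasurableSpace X] {μ : Measure X} {g : X → ℝ}

theorem integral_pow_le_pow_sub_mul_integral_pow (hg0 : ∀ x, 0 ≤ g x) {M : ℝ}
    (hgM : ∀ x, g x ≤ M) {n₀ n : ℕ} (hn : n₀ ≤ n) (hint : Integrable (fun x => g x ^ n₀) μ) :
    ∫ x, g x ^ n ∂μ ≤ M ^ (n - n₀) * ∫ x, g x ^ n₀ ∂μ := by
  rw [← integral_const_mul]
  refine integral_mono_of_nonneg (ae_of_all _ fun x => pow_nonneg (hg0 x) n)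
    (hint.const_mul _) (ae_of_all _ fun x => ?_)
  calc g x ^ n = g x ^ (n - n₀) * g x ^ n₀ := (pow_sub_mul_pow _ hn).symm
    _ ≤ M ^ (n - n₀) * g x ^ n₀ := by have := hg0 x; have := hgM x; gcongr

theorem pow_sub_mul_setIntegral_pow_le_integral_pow [TopologicalSpace X]
    [OpensMeasurableSpace X] (hg : Continuous g) (hg0 : ∀ x, 0 ≤ g x) {c : ℝ} (hc : 0 ≤ c)
    {n₀ n : ℕ} (hn : n₀ ≤ n) (hint : Integrable (fun x => g x ^ n) μ) :
    c ^ (n - n₀) * ∫ x in {x | c < g x}, g x ^ n₀ ∂μ ≤ ∫ x, g x ^ n ∂μ := by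
  have hU : MeasurableSet {x | c < g x} := measurableSet_lt measurable_const hg.measurable
  calc c ^ (n - n₀) * ∫ x in {x | c < g x}, g x ^ n₀ ∂μ
      = ∫ x in {x | c < g x}, c ^ (n - n₀) * g x ^ n₀ ∂μ := (integral_const_mul _ _).symm
    _ ≤ ∫ x in {x | c < g x}, g x ^ n ∂μ := by
        refine integral_mono_of_nonneg
          (ae_of_all _ fun x => mul_nonneg (pow_nonneg hc _) (pow_nonneg (hg0 x) _))
          hint.integrableOn ((ae_restrict_iff' hU).mpr (ae_of_all _ fun x (hx : c < g x) => ?_))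
        calc c ^ (n - n₀) * g x ^ n₀ ≤ g x ^ (n - n₀) * g x ^ n₀ := by have := hg0 x; gcongr
          _ = g x ^ n := pow_sub_mul_pow _ hn
    _ ≤ ∫ x, g x ^ n ∂μ :=
        setIntegral_le_integral hint (ae_of_all _ fun x => pow_nonneg (hg0 x) n)

theorem setIntegral_pow_pos [TopologicalSpace X] [μ.IsOpenPosMeasure] (hg : Continuous g)
    (hg0 : ∀ x, 0 ≤ g x) {c : ℝ} (hc : 0 ≤ c) (hcg : ∃ x, c < g x) {n : ℕ}
    (hint : Integrable (fun x => g x ^ n) μ) :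
    0 < ∫ x in {x | c < g x}, g x ^ n ∂μ := by
  have hsupp : Function.support (fun x => g x ^ n) ∩ {x | c < g x} = {x | c < g x} :=
    inter_eq_right.2 fun x hx => pow_ne_zero _ (hc.trans_lt hx).ne'
  rw [setIntegral_pos_iff_support_of_nonneg_ae (ae_of_all _ fun x => pow_nonneg (hg0 x) n)
    hint.integrableOn, hsupp]
  exact (isOpen_lt continuous_const hg).measure_pos μ hcg

theorem tendsto_log_integral_pow_div [TopologicalSpace X] [OpensMeasurableSpace X]
    [μ.IsOpenPosMeasure] (hg : Continuous g) (hg0 : ∀ x, 0 ≤ g x) {M : ℝ}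
    (hM : IsLUB (range g) M) (hM0 : 0 < M)
    (hint : ∀ᶠ n in atTop, Integrable (fun x => g x ^ n) μ) :
    Tendsto (fun n : ℕ => Real.log (∫ x, g x ^ n ∂μ) / n) atTop (𝓝 (Real.log M)) := by
  obtain ⟨n₀, hn₀⟩ := eventually_atTop.1 hint
  refine tendsto_log_div_of_pow_bounds hM0 ⟨(M ^ n₀)⁻¹ * ∫ x, g x ^ n₀ ∂μ, ?_⟩ fun c hc => ?_
  · filter_upwards [eventually_ge_atTop n₀] with n hn
    calc ∫ x, g x ^ n ∂μ ≤ M ^ (n - n₀) * ∫ x, g x ^ n₀ ∂μ :=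
          integral_pow_le_pow_sub_mul_integral_pow hg0 (fun x => hM.1 ⟨x, rfl⟩) hn (hn₀ n₀ le_rfl)
      _ = _ := by rw [pow_sub₀ _ hM0.ne' hn]; ring
  · obtain ⟨hc0, hcM⟩ := hc
    obtain ⟨_, ⟨x, rfl⟩, hcx, -⟩ := hM.exists_between hcM
    have hA := setIntegral_pow_pos hg hg0 hc0.le ⟨x, hcx⟩ (hn₀ n₀ le_rfl)
    refine ⟨(c ^ n₀)⁻¹ * ∫ x in {x | c < g x}, g x ^ n₀ ∂μ, by positivity, ?_⟩
    filter_upwards [eventually_ge_atTop n₀] with n hn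
    calc _ = c ^ (n - n₀) * ∫ x in {x | c < g x}, g x ^ n₀ ∂μ := by
          rw [pow_sub₀ _ hc0.ne' hn]; ring
      _ ≤ ∫ x, g x ^ n ∂μ :=
          pow_sub_mul_setIntegral_pow_le_integral_pow hg hg0 hc0.le hn (hn₀ n hn)

end PowIntegrals

section MonomialWeight

variable {ι : Type*} [Fintype ι] {Q : (ι → ℂ) → ℝ} {t : ι → ℝ}

/-- `|z^t|² e^{-2Q(z)}`: the integrand of `I_n` is its `n`-th power. -/
noncomputable def monomialWeight (Q : (ι → ℂ) → ℝ) (t : ι → ℝ) (z : ι → ℂ) : ℝ :=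
  (∏ i, ‖z i‖ ^ (2 * t i)) * Real.exp (-2 * Q z)

def logWeightValues (Q : (ι → ℂ) → ℝ) (t : ι → ℝ) : Set ℝ :=
  {y | ∃ r : ι → ℝ, (∀ i, 0 < r i) ∧ y = ∑ i, t i * Real.log (r i) - Q (fun i => (r i : ℂ))}

theorem logWeightValues_nonempty : (logWeightValues Q t).Nonempty :=
  ⟨_, fun _ => 1, fun _ => one_pos, rfl⟩

theorem monomialWeight_nonneg (z : ι → ℂ) : 0 ≤ monomialWeight Q t z := by
  unfold monomialWeight; positivity

theorem continuous_monomialWeight (hQ : Continuous Q) (ht0 : ∀ i, 0 ≤ t i) :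
    Continuous (monomialWeight Q t) := by
  refine (continuous_finsetProd _ fun i _ => ?_).mul (continuous_const.mul hQ).rexp
  exact (continuous_norm.comp (continuous_apply i)).rpow_const fun _ => Or.inr (by linarith [ht0 i])

theorem monomialWeight_pow (n : ℕ) (z : ι → ℂ) :
    monomialWeight Q t z ^ n = (∏ i, ‖z i‖ ^ (2 * (n : ℝ) * t i)) * Real.exp (-2 * n * Q z) := by
  rw [monomialWeight, mul_pow, ← Finset.prod_pow, ← Real.exp_nat_mul]
  congr 1
  · refine Finset.prod_congr rfl fun i _ => ?_
    rw [← Real.rpow_natCast, ← Real.rpow_mul (norm_nonneg _)]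
    ring_nf
  · ring_nf

theorem monomialWeight_eq_exp (hcirc : ∀ z : ι → ℂ, Q z = Q (fun i => (‖z i‖ : ℂ)))
    {z : ι → ℂ} (hz : ∀ i, z i ≠ 0) :
    monomialWeight Q t z =
      Real.exp (2 * (∑ i, t i * Real.log ‖z i‖ - Q (fun i => (‖z i‖ : ℂ)))) := by
  have hpow (i : ι) : ‖z i‖ ^ (2 * t i) = Real.exp (2 * (t i * Real.log ‖z i‖)) := by
    rw [Real.rpow_def_of_pos (norm_pos_iff.2 (hz i))]; ring_nf
  rw [monomialWeight, Finset.prod_congr rfl fun i _ => hpow i, ← Real.exp_sum, ← Real.exp_add,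
    ← hcirc, ← Finset.mul_sum]
  ring_nf

theorem image_monomialWeight (hcirc : ∀ z : ι → ℂ, Q z = Q (fun i => (‖z i‖ : ℂ))) :
    monomialWeight Q t '' univ.pi (fun _ => {0}ᶜ) =
      (fun y => Real.exp (2 * y)) '' logWeightValues Q t := by
  ext w
  constructor
  · rintro ⟨z, hz, rfl⟩
    have hz' (i : ι) : z i ≠ 0 := hz i (mem_univ i)
    exact ⟨_, ⟨fun i => ‖z i‖, fun i => norm_pos_iff.2 (hz' i), rfl⟩,
      (monomialWeight_eq_exp hcirc hz').symm⟩
  · rintro ⟨_, ⟨r, hr, rfl⟩, rfl⟩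
    have hnorm (i : ι) : ‖(r i : ℂ)‖ = r i := by simp [abs_of_pos (hr i)]
    have hz (i : ι) : (r i : ℂ) ≠ 0 := Complex.ofReal_ne_zero.2 (hr i).ne'
    refine ⟨fun i => (r i : ℂ), fun i _ => hz i, ?_⟩
    simp only [monomialWeight_eq_exp hcirc hz, hnorm]

theorem isLUB_range_monomialWeight (hQ : Continuous Q) (ht0 : ∀ i, 0 ≤ t i)
    (hcirc : ∀ z : ι → ℂ, Q z = Q (fun i => (‖z i‖ : ℂ))) {L : ℝ}
    (hL : IsLUB (logWeightValues Q t) L) :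
    IsLUB (range (monomialWeight Q t)) (Real.exp (2 * L)) := by
  have hdense : Dense (univ.pi fun _ : ι => ({0}ᶜ : Set ℂ)) :=
    dense_pi _ fun _ _ => dense_compl_singleton 0
  have hcont := continuous_monomialWeight hQ ht0
  rw [← isLUB_iff_of_subset_of_subset_closure (image_subset_range _ _)
    (hcont.range_subset_closure_image_dense hdense), image_monomialWeight hcirc]
  refine hL.isLUB_of_tendsto (fun a _ b _ hab => Real.exp_le_exp.2 (by linarith))
    logWeightValues_nonempty ?_
  exact ((continuous_const.mul continuous_id).rexp.tendsto L).mono_left nhdsWithin_le_nhds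

theorem monomialWeight_le_mul_exp (ht0 : ∀ i, 0 ≤ t i) (htsum : ∑ i, t i ≤ 1) {e : ℝ}
    (he : 1 ≤ e) {z : ι → ℂ} (hz : ∀ i, ‖z i‖ ≤ e) :
    monomialWeight Q t z ≤ e ^ (2 : ℝ) * Real.exp (-2 * Q z) := by
  refine mul_le_mul_of_nonneg_right ?_ (Real.exp_nonneg _)
  refine prod_rpow_le_rpow_of_sum_le _ (fun i _ => norm_nonneg _) (fun i _ => hz i) he
    (fun i _ => by linarith [ht0 i]) ?_
  rw [← Finset.mul_sum]; linarith

theorem monomialWeight_le_rpow_neg_of_growth (ht0 : ∀ i, 0 ≤ t i) (htsum : ∑ i, t i ≤ 1)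
    {ε R : ℝ} (hR : ∀ z : ι → ℂ, R ≤ √(∑ i, ‖z i‖ ^ 2) →
      (1 + ε) * Real.log √(∑ i, ‖z i‖ ^ 2) ≤ Q z)
    {z : ι → ℂ} (hz : max R 1 ≤ √(∑ i, ‖z i‖ ^ 2)) :
    monomialWeight Q t z ≤ √(∑ i, ‖z i‖ ^ 2) ^ (-2 * ε) := by
  set e := √(∑ i, ‖z i‖ ^ 2)
  have he : 1 ≤ e := (le_max_right R 1).trans hz
  have he0 : 0 < e := zero_lt_one.trans_le he
  calc monomialWeight Q t z ≤ e ^ (2 : ℝ) * Real.exp (-2 * Q z) :=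
        monomialWeight_le_mul_exp ht0 htsum he (norm_apply_le_sqrt_sum_sq z)
    _ ≤ e ^ (2 : ℝ) * Real.exp (-2 * ((1 + ε) * Real.log e)) := by
        have := hR z ((le_max_left R 1).trans hz)
        gcongr ?_ * Real.exp ?_
        linarith
    _ = e ^ (-2 * ε) := by
        simp only [Real.rpow_def_of_pos he0, ← Real.exp_add]
        ring_nf

-- `‖z‖` is the sup norm of `ι → ℂ`, dominated by the Euclidean norm of the growth condition.
theorem monomialWeight_le_norm_rpow_neg (ht0 : ∀ i, 0 ≤ t i) (htsum : ∑ i, t i ≤ 1)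
    {ε R : ℝ} (hε : 0 ≤ ε) (hR : ∀ z : ι → ℂ, R ≤ √(∑ i, ‖z i‖ ^ 2) →
      (1 + ε) * Real.log √(∑ i, ‖z i‖ ^ 2) ≤ Q z)
    {z : ι → ℂ} (hz : max R 1 ≤ ‖z‖) :
    monomialWeight Q t z ≤ ‖z‖ ^ (-2 * ε) := by
  have hnorm : ‖z‖ ≤ √(∑ i, ‖z i‖ ^ 2) :=
    (pi_norm_le_iff_of_nonneg (Real.sqrt_nonneg _)).2 (norm_apply_le_sqrt_sum_sq z)
  calc monomialWeight Q t z ≤ √(∑ i, ‖z i‖ ^ 2) ^ (-2 * ε) :=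
        monomialWeight_le_rpow_neg_of_growth ht0 htsum hR (hz.trans hnorm)
    _ ≤ ‖z‖ ^ (-2 * ε) :=
        Real.rpow_le_rpow_of_nonpos (zero_lt_one.trans_le ((le_max_right R 1).trans hz)) hnorm
          (by linarith)

theorem monomialWeight_le_max_rpow_two (hQ0 : ∀ z, 0 ≤ Q z) (ht0 : ∀ i, 0 ≤ t i)
    (htsum : ∑ i, t i ≤ 1) {ε R : ℝ} (hε : 0 ≤ ε) (hR : ∀ z : ι → ℂ, R ≤ √(∑ i, ‖z i‖ ^ 2) →
      (1 + ε) * Real.log √(∑ i, ‖z i‖ ^ 2) ≤ Q z) (z : ι → ℂ) :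
    monomialWeight Q t z ≤ max R 1 ^ (2 : ℝ) := by
  have hR1 : 1 ≤ max R 1 := le_max_right R 1
  rcases le_or_gt (max R 1) √(∑ i, ‖z i‖ ^ 2) with hz | hz
  · calc monomialWeight Q t z ≤ √(∑ i, ‖z i‖ ^ 2) ^ (-2 * ε) :=
          monomialWeight_le_rpow_neg_of_growth ht0 htsum hR hz
      _ ≤ 1 := Real.rpow_le_one_of_one_le_of_nonpos (hR1.trans hz) (by linarith)
      _ ≤ max R 1 ^ (2 : ℝ) := Real.one_le_rpow hR1 zero_le_two
  · calc monomialWeight Q t z ≤ max R 1 ^ (2 : ℝ) * Real.exp (-2 * Q z) :=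
          monomialWeight_le_mul_exp ht0 htsum hR1 fun i =>
            (norm_apply_le_sqrt_sum_sq z i).trans hz.le
      _ ≤ max R 1 ^ (2 : ℝ) := by
          have := hQ0 z
          exact mul_le_of_le_one_right (by positivity) (Real.exp_le_one_iff.2 (by linarith))

theorem bddAbove_logWeightValues (hQ0 : ∀ z, 0 ≤ Q z) (ht0 : ∀ i, 0 ≤ t i)
    (htsum : ∑ i, t i ≤ 1) (hcirc : ∀ z : ι → ℂ, Q z = Q (fun i => (‖z i‖ : ℂ)))
    {ε R : ℝ} (hε : 0 ≤ ε) (hR : ∀ z : ι → ℂ, R ≤ √(∑ i, ‖z i‖ ^ 2) →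
      (1 + ε) * Real.log √(∑ i, ‖z i‖ ^ 2) ≤ Q z) :
    BddAbove (logWeightValues Q t) := by
  refine ⟨Real.log (max R 1), fun y hy => ?_⟩
  obtain ⟨z, -, hzy⟩ : Real.exp (2 * y) ∈ monomialWeight Q t '' univ.pi (fun _ => {0}ᶜ) :=
    image_monomialWeight hcirc ▸ mem_image_of_mem _ hy
  have := hzy ▸ monomialWeight_le_max_rpow_two hQ0 ht0 htsum hε hR z
  rw [Real.rpow_def_of_pos (zero_lt_one.trans_le (le_max_right R 1)), Real.exp_le_exp] at this
  linarith

theorem integrable_monomialWeight_pow (hQ : Continuous Q) (ht0 : ∀ i, 0 ≤ t i)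
    (htsum : ∑ i, t i ≤ 1) {ε R : ℝ} (hε : 0 < ε) (hR : ∀ z : ι → ℂ, R ≤ √(∑ i, ‖z i‖ ^ 2) →
      (1 + ε) * Real.log √(∑ i, ‖z i‖ ^ 2) ≤ Q z) {n : ℕ} (hn : Fintype.card ι < ε * n) :
    Integrable (fun z => monomialWeight Q t z ^ n) := by
  refine integrable_of_le_norm_rpow_neg ((continuous_monomialWeight hQ ht0).pow n)
    (q := 2 * ε * n) (R := max R 1) ?_ fun z hz => ?_
  · have hdim : (Module.finrank ℝ (ι → ℂ) : ℝ) = 2 * Fintype.card ι := by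
      simp [Module.finrank_pi_fintype, Complex.finrank_real_complex, mul_comm]
    rw [hdim]
    linarith
  · rw [Real.norm_of_nonneg (pow_nonneg (monomialWeight_nonneg z) n)]
    calc monomialWeight Q t z ^ n ≤ (‖z‖ ^ (-2 * ε)) ^ n :=
          pow_le_pow_left₀ (monomialWeight_nonneg z)
            (monomialWeight_le_norm_rpow_neg ht0 htsum hε.le hR hz) n
      _ = ‖z‖ ^ (-(2 * ε * n)) := by
          rw [← Real.rpow_natCast, ← Real.rpow_mul (norm_nonneg z)]; ring_nf

end MonomialWeight

theorem stmt_2_general (m : ℕ) (Q : (Fin m → ℂ) → ℝ)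
    (hQ0 : ∀ z, 0 ≤ Q z) (hQC2 : ContDiff ℝ 2 Q)
    (hcirc : ∀ z : Fin m → ℂ, Q z = Q (fun i => (‖z i‖ : ℂ)))
    (ε₀ : ℝ) (hε₀ : 0 < ε₀)
    (hgrowth : ∃ R : ℝ, ∀ z : Fin m → ℂ,
      R ≤ Real.sqrt (∑ i, ‖z i‖ ^ 2) →
      (1 + ε₀) * Real.log (Real.sqrt (∑ i, ‖z i‖ ^ 2)) ≤ Q z)
    (t : Fin m → ℝ) (ht0 : ∀ i, 0 ≤ t i) (htsum : ∑ i, t i ≤ 1) :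
    ∃ L : ℝ,
      IsLUB {y : ℝ | ∃ r : Fin m → ℝ, (∀ i, 0 < r i) ∧
        y = ∑ i, t i * Real.log (r i) - Q (fun i => (r i : ℂ))} L ∧
      (∀ᶠ n : ℕ in atTop, Integrable
        (fun z : Fin m → ℂ =>
          (∏ i, ‖z i‖ ^ (2 * (n : ℝ) * t i)) * Real.exp (-2 * n * Q z))
        volume) ∧
      Tendsto (fun n : ℕ => (1 / (2 * (n : ℝ))) * Real.log
        (∫ z : Fin m → ℂ,
          (∏ i, ‖z i‖ ^ (2 * (n : ℝ) * t i)) * Real.exp (-2 * n * Q z)))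
        atTop (nhds L) := by
  obtain ⟨R, hR⟩ := hgrowth
  have hQ : Continuous Q := hQC2.continuous
  obtain ⟨L, hL⟩ : ∃ L, IsLUB (logWeightValues Q t) L :=
    ⟨_, isLUB_csSup logWeightValues_nonempty
      (bddAbove_logWeightValues hQ0 ht0 htsum hcirc hε₀.le hR)⟩
  have hint : ∀ᶠ n : ℕ in atTop, Integrable (fun z => monomialWeight Q t z ^ n) := by
    filter_upwards [(tendsto_natCast_atTop_atTop.const_mul_atTop hε₀).eventually_gt_atTop
      (m : ℝ)] with n hn
    exact integrable_monomialWeight_pow hQ ht0 htsum hε₀ hR (by simpa using hn)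
  have hlim := tendsto_log_integral_pow_div (continuous_monomialWeight hQ ht0)
    monomialWeight_nonneg (isLUB_range_monomialWeight hQ ht0 hcirc hL) (Real.exp_pos _) hint
  rw [Real.log_exp] at hlim
  simp only [← monomialWeight_pow]
  refine ⟨L, hL, hint, ?_⟩
  convert hlim.div_const 2 using 2 <;> ring

/-- The key asymptotic computation (via Varadhan's lemma) in the proof of Lemma 3.1:
for a nonnegative `C²` multi-circular weight `Q` on `ℂ^m` with super-logarithmic growth
and `T ∈ [0,1]^m` with `∑ tⱼ ≤ 1`, the weighted `L²`-norms
`I_n = ∫ ∏ |z_j|^(2 n t_j) e^(-2 n Q(z)) dV` are finite for large `n` and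
`(1/(2n)) log I_n → sup_{r ∈ (0,∞)^m} (∑ t_j log r_j - Q(r))`, this sup being finite. -/
theorem stmt_2 (m : ℕ) (hm : 1 ≤ m) (Q : (Fin m → ℂ) → ℝ)
    (hQ0 : ∀ z, 0 ≤ Q z) (hQC2 : ContDiff ℝ 2 Q)
    (hcirc : ∀ z : Fin m → ℂ, Q z = Q (fun i => (‖z i‖ : ℂ)))
    (ε₀ : ℝ) (hε₀ : 0 < ε₀)
    (hgrowth : ∃ R : ℝ, ∀ z : Fin m → ℂ,
      R ≤ Real.sqrt (∑ i, ‖z i‖ ^ 2) →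
      (1 + ε₀) * Real.log (Real.sqrt (∑ i, ‖z i‖ ^ 2)) ≤ Q z)
    (t : Fin m → ℝ) (ht0 : ∀ i, 0 ≤ t i) (ht1 : ∀ i, t i ≤ 1) (htsum : ∑ i, t i ≤ 1) :
    ∃ L : ℝ,
      IsLUB {y : ℝ | ∃ r : Fin m → ℝ, (∀ i, 0 < r i) ∧
        y = ∑ i, t i * Real.log (r i) - Q (fun i => (r i : ℂ))} L ∧
      (∀ᶠ n : ℕ in atTop, Integrable
        (fun z : Fin m → ℂ =>
          (∏ i, ‖z i‖ ^ (2 * (n : ℝ) * t i)) * Real.exp (-2 * n * Q z))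
        volume) ∧
      Tendsto (fun n : ℕ => (1 / (2 * (n : ℝ))) * Real.log
        (∫ z : Fin m → ℂ,
          (∏ i, ‖z i‖ ^ (2 * (n : ℝ) * t i)) * Real.exp (-2 * n * Q z)))
        atTop (nhds L) :=
  stmt_2_general m Q hQ0 hQC2 hcirc ε₀ hε₀ hgrowth t ht0 htsum
end

section
/- Let m ≥ 1. For every ε > 0 and every z ∈ (ℂ∖{0})^m there exist δ > 0 and N ∈ ℕ such that for all n ≥ N, the number of multi-indices J ∈ ℕ^m with |J| ≤ n and C(n,J)^{1/2} |z^J| > (1+‖z‖²)^{n/2} e^{−ε n} is at least δ · binom(n+m, m). -/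
/-!
Put `s_i = ‖z_i‖²` and `R = 1 + ∑ s_i`. Squared, the inequality says `C(n,J) s^J > R^n e^{-2εn}`.
Writing `k = (n - |J|, J)` and `w = (1, s)`, the multinomial distribution with parameter `k/n`
is largest at `k` (because `k! k^l ≤ l! k^k`), and it has at most `(n+1)^{m+1}` atoms, so
`C(n,J) ∏ (k_j/n)^{k_j} ≥ (n+1)^{-(m+1)}`. If moreover `k_j/n ≤ e^ε w_j/R` for every `j`, then
`C(n,J) s^J ≥ R^n e^{-εn} (n+1)^{-(m+1)}`, which beats `R^n e^{-2εn}` for large `n`. The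
condition holds on a box of side `⌊θn⌋` just above the point `n s/R`, for a small `θ > 0`, and
such a box holds a fixed proportion of the `binom(n+m,m) ≤ (n+m)^m` multi-indices.
-/

open MeasureTheory Filter
open scoped Classical

/-- The multinomial coefficient `C(n,J) = n! / ((n-|J|)! j₁! ⋯ j_m!)`. -/
noncomputable def multiCoeff (m n : ℕ) (J : Fin m → ℕ) : ℝ :=
  (n.factorial : ℝ) / (((n - ∑ i, J i).factorial : ℝ) * ∏ i, ((J i).factorial : ℝ))

/-- The random elliptic polynomial `G_n(z) = ∑_{|J| ≤ n} a_J C(n,J)^(1/2) z^J`. -/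
noncomputable def ellipticPoly {Ω : Type*} {m : ℕ} (a : (Fin m → ℕ) → Ω → ℂ)
    (n : ℕ) (ω : Ω) (z : Fin m → ℂ) : ℂ :=
  ∑ J ∈ (Fintype.piFinset fun _ : Fin m => Finset.range (n + 1)).filter
      (fun J => ∑ i, J i ≤ n),
    a J ω * (Real.sqrt (multiCoeff m n J) : ℂ) * ∏ i, z i ^ J i

open Finset
open scoped Nat Topology

theorem Nat.factorial_mul_pow_le_factorial_mul_pow (k l : ℕ) : k ! * k ^ l ≤ l ! * k ^ k := by
  rcases le_total k l with h | h
  · obtain ⟨d, rfl⟩ := Nat.exists_eq_add_of_le h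
    calc k ! * k ^ (k + d) = k ! * k ^ d * k ^ k := by ring
      _ ≤ (k + d)! * k ^ k := by
        gcongr
        exact (Nat.mul_le_mul_left _ (Nat.pow_le_pow_left k.le_succ d)).trans
          Nat.factorial_mul_pow_le_factorial
  · obtain ⟨d, rfl⟩ := Nat.exists_eq_add_of_le h
    have hfact : (l + d)! ≤ l ! * (l + d) ^ d := by
      rw [← Nat.factorial_mul_descFactorial (Nat.le_add_left d l), Nat.add_sub_cancel]
      exact Nat.mul_le_mul_left _ (Nat.descFactorial_le_pow _ _)
    calc (l + d)! * (l + d) ^ l ≤ l ! * (l + d) ^ d * (l + d) ^ l := by gcongr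
      _ = l ! * (l + d) ^ (l + d) := by ring

section Multinomial

variable {ι : Type*} [Fintype ι]

/-- The multinomial distribution with parameters `k / ∑ k` is largest at `k`. -/
theorem Nat.multinomial_mul_prod_pow_le (k l : ι → ℕ) (h : ∑ i, l i = ∑ i, k i) :
    multinomial univ l * ∏ i, k i ^ l i ≤ multinomial univ k * ∏ i, k i ^ k i := by
  have hpos : 0 < (∏ i, (l i)!) * ∏ i, (k i)! := by positivity
  refine Nat.le_of_mul_le_mul_right ?_ hpos
  calc (multinomial univ l * ∏ i, k i ^ l i) * ((∏ i, (l i)!) * ∏ i, (k i)!)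
      = ((∏ i, (l i)!) * multinomial univ l) * ∏ i, ((k i)! * k i ^ l i) := by
        rw [prod_mul_distrib]; ring
    _ ≤ ((∏ i, (k i)!) * multinomial univ k) * ∏ i, ((l i)! * k i ^ k i) := by
        rw [Nat.multinomial_spec, Nat.multinomial_spec, h]
        exact Nat.mul_le_mul_left _
          (prod_le_prod' fun i _ => Nat.factorial_mul_pow_le_factorial_mul_pow _ _)
    _ = (multinomial univ k * ∏ i, k i ^ k i) * ((∏ i, (l i)!) * ∏ i, (k i)!) := by
        rw [prod_mul_distrib]; ring

theorem Nat.sum_pow_sum_le (k : ι → ℕ) :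
    (∑ i, k i) ^ (∑ i, k i) ≤
      (∑ i, k i + 1) ^ Fintype.card ι * multinomial univ k * ∏ i, k i ^ k i := by
  set n := ∑ i, k i
  have hcard : #(piAntidiag (univ : Finset ι) n) ≤ (n + 1) ^ Fintype.card ι := by
    calc #(piAntidiag (univ : Finset ι) n) ≤ #(Fintype.piFinset fun _ : ι => range (n + 1)) := by
          refine card_le_card fun l hl => Fintype.mem_piFinset.2 fun i => ?_
          rw [mem_piAntidiag] at hl
          exact mem_range.2 (Nat.lt_succ_of_le (hl.1 ▸ single_le_sum (fun j _ => Nat.zero_le (l j)) (mem_univ i)))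
      _ = (n + 1) ^ Fintype.card ι := by simp
  calc n ^ n = ∑ l ∈ piAntidiag univ n, multinomial univ l * ∏ i, k i ^ l i :=
        sum_pow_eq_sum_piAntidiag _ _ _
    _ ≤ ∑ _l ∈ piAntidiag univ n, multinomial univ k * ∏ i, k i ^ k i :=
        sum_le_sum fun l hl => Nat.multinomial_mul_prod_pow_le k l (mem_piAntidiag.1 hl).1
    _ ≤ (n + 1) ^ Fintype.card ι * multinomial univ k * ∏ i, k i ^ k i := by
        rw [sum_const, smul_eq_mul, mul_assoc]
        gcongr

theorem sum_pow_le_pow_mul_multinomial_mul_prod_pow {w : ι → ℝ} (hw : ∀ i, 0 ≤ w i) {r : ℝ}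
    {k : ι → ℕ} {n : ℕ} (hn : ∑ i, k i = n) (hk : ∀ i, k i * ∑ j, w j ≤ r * n * w i) :
    (∑ i, w i) ^ n ≤
      r ^ n * (n + 1) ^ Fintype.card ι * Nat.multinomial univ k * ∏ i, w i ^ k i := by
  have hsum : 0 ≤ ∑ i, w i := sum_nonneg fun i _ => hw i
  have hentropy : (n : ℝ) ^ n ≤
      (n + 1) ^ Fintype.card ι * Nat.multinomial univ k * ∏ i, (k i : ℝ) ^ k i := by
    subst hn; exact_mod_cast Nat.sum_pow_sum_le k
  have hterms : (∑ i, w i) ^ n * ∏ i, (k i : ℝ) ^ k i ≤ (r * n) ^ n * ∏ i, w i ^ k i := by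
    calc (∑ i, w i) ^ n * ∏ i, (k i : ℝ) ^ k i = ∏ i, (k i * ∑ j, w j) ^ k i := by
          simp only [mul_pow, prod_mul_distrib, prod_pow_eq_pow_sum, hn]; ring
      _ ≤ ∏ i, (r * n * w i) ^ k i :=
          prod_le_prod (fun i _ => pow_nonneg (mul_nonneg (Nat.cast_nonneg _) hsum) _)
            fun i _ => pow_le_pow_left₀ (mul_nonneg (Nat.cast_nonneg _) hsum) (hk i) _
      _ = (r * n) ^ n * ∏ i, w i ^ k i := by
          simp only [mul_pow, prod_mul_distrib, prod_pow_eq_pow_sum, hn]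
  have hnn : (0 : ℝ) < n ^ n := by exact_mod_cast Nat.pow_self_pos
  refine le_of_mul_le_mul_right ?_ hnn
  calc (∑ i, w i) ^ n * n ^ n
      ≤ (∑ i, w i) ^ n * ((n + 1) ^ Fintype.card ι * Nat.multinomial univ k *
          ∏ i, (k i : ℝ) ^ k i) := by
        gcongr
    _ = (n + 1) ^ Fintype.card ι * Nat.multinomial univ k *
          ((∑ i, w i) ^ n * ∏ i, (k i : ℝ) ^ k i) := by ring
    _ ≤ (n + 1) ^ Fintype.card ι * Nat.multinomial univ k * ((r * n) ^ n * ∏ i, w i ^ k i) := by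
        gcongr
    _ = _ := by ring

end Multinomial

theorem multiCoeff_eq_multinomial {m n : ℕ} {J : Fin m → ℕ} (hJ : ∑ i, J i ≤ n) :
    multiCoeff m n J = Nat.multinomial univ (Fin.cons (n - ∑ i, J i) J : Fin (m + 1) → ℕ) := by
  have hspec := Nat.multinomial_spec univ (Fin.cons (n - ∑ i, J i) J : Fin (m + 1) → ℕ)
  simp only [Fin.prod_univ_succ, Fin.sum_univ_succ, Fin.cons_zero, Fin.cons_succ,
    Nat.sub_add_cancel hJ] at hspec
  rw [multiCoeff, div_eq_iff (by positivity), ← hspec]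
  push_cast
  ring

theorem multiCoeff_pos {m n : ℕ} {J : Fin m → ℕ} (hJ : ∑ i, J i ≤ n) : 0 < multiCoeff m n J := by
  rw [multiCoeff_eq_multinomial hJ]
  exact_mod_cast Nat.multinomial_pos _ _

theorem one_add_sum_pow_le_multiCoeff_mul_prod_pow {m n : ℕ} {s : Fin m → ℝ}
    (hs : ∀ i, 0 ≤ s i) {r : ℝ} {J : Fin m → ℕ} (hJ : ∑ i, J i ≤ n)
    (hrest : ((n - ∑ i, J i : ℕ) : ℝ) * (1 + ∑ i, s i) ≤ r * n)
    (hJs : ∀ i, J i * (1 + ∑ i, s i) ≤ r * n * s i) :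
    (1 + ∑ i, s i) ^ n ≤ r ^ n * (n + 1) ^ (m + 1) * multiCoeff m n J * ∏ i, s i ^ J i := by
  have key := sum_pow_le_pow_mul_multinomial_mul_prod_pow (w := Fin.cons 1 s) (r := r)
    (k := Fin.cons (n - ∑ i, J i) J) (n := n) (Fin.forall_fin_succ.2 ⟨zero_le_one, hs⟩)
    (by simp [Fin.sum_univ_succ, Nat.sub_add_cancel hJ])
    (Fin.forall_fin_succ.2 ⟨by simpa [Fin.sum_univ_succ] using hrest,
      by simpa [Fin.sum_univ_succ] using hJs⟩)
  simpa [Fin.sum_univ_succ, Fin.prod_univ_succ, multiCoeff_eq_multinomial hJ] using key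

theorem sum_le_and_sub_sum_mul_le {m n : ℕ} {s : Fin m → ℝ} (hs : ∀ i, 0 ≤ s i) {T : ℝ}
    {J : Fin m → ℕ} (hlow : ∀ i, n * s i ≤ J i * (1 + ∑ i, s i))
    (hup : ∀ i, J i * (1 + ∑ i, s i) ≤ n * s i + T) (hT : m * T ≤ n) :
    ∑ i, J i ≤ n ∧ ((n - ∑ i, J i : ℕ) : ℝ) * (1 + ∑ i, s i) ≤ n := by
  set R := 1 + ∑ i, s i
  have hR : 0 < R := add_pos_of_pos_of_nonneg one_pos (sum_nonneg fun i _ => hs i)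
  have hlow' : n * ∑ i, s i ≤ (∑ i, J i : ℕ) * R := by
    push_cast
    rw [mul_sum, sum_mul]
    exact sum_le_sum fun i _ => hlow i
  have hup' : (∑ i, J i : ℕ) * R ≤ n * ∑ i, s i + m * T := by
    push_cast
    rw [mul_sum, sum_mul]
    simpa [sum_add_distrib] using sum_le_sum fun i (_ : i ∈ univ) => hup i
  have hJ : ∑ i, J i ≤ n := by
    have : ((∑ i, J i : ℕ) : ℝ) ≤ n := le_of_mul_le_mul_right (by linarith) hR
    exact_mod_cast this
  refine ⟨hJ, ?_⟩
  rw [Nat.cast_sub hJ]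
  linarith

theorem rpow_mul_exp_lt_sqrt_multiCoeff_mul_prod {m n : ℕ} {z : Fin m → ℂ} (hz : ∀ i, z i ≠ 0)
    {ε : ℝ} {J : Fin m → ℕ} (hJ : ∑ i, J i ≤ n)
    (hrest : ((n - ∑ i, J i : ℕ) : ℝ) * (1 + ∑ i, ‖z i‖ ^ 2) ≤ Real.exp ε * n)
    (hJz : ∀ i, J i * (1 + ∑ i, ‖z i‖ ^ 2) ≤ Real.exp ε * n * ‖z i‖ ^ 2)
    (hgrowth : ((n : ℝ) + 1) ^ (m + 1) < Real.exp (ε * n)) :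
    (1 + ∑ i, ‖z i‖ ^ 2) ^ ((n : ℝ) / 2) * Real.exp (-ε * n) <
      Real.sqrt (multiCoeff m n J) * ∏ i, ‖z i‖ ^ J i := by
  set R := 1 + ∑ i, ‖z i‖ ^ 2
  set P := ∏ i, (‖z i‖ ^ 2) ^ J i
  set E := Real.exp (ε * n)
  have hR : 0 ≤ R := by positivity
  have hP : 0 < P := prod_pos fun i _ => by have := norm_pos_iff.2 (hz i); positivity
  have hC := multiCoeff_pos hJ
  have hbound : R ^ n ≤ E * (n + 1) ^ (m + 1) * multiCoeff m n J * P := by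
    have := one_add_sum_pow_le_multiCoeff_mul_prod_pow (fun i => sq_nonneg ‖z i‖) hJ hrest hJz
    rwa [← Real.exp_nat_mul, mul_comm (n : ℝ)] at this
  have hsq : R ^ n * (E⁻¹) ^ 2 < multiCoeff m n J * P := by
    rw [inv_pow, ← div_eq_mul_inv, div_lt_iff₀ (by positivity)]
    calc R ^ n ≤ E * (n + 1) ^ (m + 1) * multiCoeff m n J * P := hbound
      _ < E * E * multiCoeff m n J * P := by gcongr
      _ = multiCoeff m n J * P * E ^ 2 := by ring
  rw [Real.rpow_div_two_eq_sqrt _ hR, Real.rpow_natCast, neg_mul, Real.exp_neg]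
  refine lt_of_pow_lt_pow_left₀ 2 (by positivity) ?_
  rw [mul_pow, mul_pow, ← pow_mul, mul_comm n, pow_mul, Real.sq_sqrt hR, Real.sq_sqrt hC.le,
    ← prod_pow]
  have hP' : ∏ i, (‖z i‖ ^ J i) ^ 2 = P := prod_congr rfl fun i _ => by ring
  rwa [hP']

theorem le_and_le_add_of_mem_Ico_ceil {x L : ℝ} (hx : 0 ≤ x) {j : ℕ}
    (hj : j ∈ Ico ⌈x⌉₊ (⌈x⌉₊ + ⌊L⌋₊)) : x ≤ j ∧ (j : ℝ) ≤ x + L := by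
  obtain ⟨hlow, hup⟩ := mem_Ico.1 hj
  have hL : 0 ≤ L := by
    by_contra! hL
    rw [Nat.floor_of_nonpos hL.le] at hup
    omega
  have hup' : (j : ℝ) + 1 ≤ ⌈x⌉₊ + ⌊L⌋₊ := by exact_mod_cast hup
  exact ⟨Nat.ceil_le.1 hlow, by linarith [Nat.ceil_lt_add_one hx, Nat.floor_le hL]⟩

theorem pow_mul_choose_le_floor_pow {m n : ℕ} {θ : ℝ} (hmn : m ≤ n) (hθn : 2 ≤ θ * n) :
    (θ / 4) ^ m * ((n + m).choose m : ℝ) ≤ (⌊θ * n⌋₊ : ℝ) ^ m := by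
  have hn : (0 : ℝ) ≤ n := n.cast_nonneg
  have hθ : 0 ≤ θ := by
    by_contra! hθ
    nlinarith
  have hmn' : (m : ℝ) ≤ n := by exact_mod_cast hmn
  have hfloor : θ * n / 2 ≤ ⌊θ * n⌋₊ := by linarith [Nat.lt_floor_add_one (θ * n)]
  calc (θ / 4) ^ m * ((n + m).choose m : ℝ) ≤ (θ / 4) ^ m * ((n + m : ℕ) : ℝ) ^ m := by
        gcongr
        exact_mod_cast Nat.choose_le_pow _ _
    _ = (θ / 4 * (n + m)) ^ m := by push_cast; rw [mul_pow]
    _ ≤ (θ * n / 2) ^ m := by gcongr; nlinarith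
    _ ≤ (⌊θ * n⌋₊ : ℝ) ^ m := by gcongr

theorem eventually_add_one_pow_lt_exp_mul (k : ℕ) {ε : ℝ} (hε : 0 < ε) :
    ∀ᶠ n : ℕ in atTop, ((n : ℝ) + 1) ^ k < Real.exp (ε * n) := by
  have hdecay := (tendsto_pow_const_div_const_pow_of_one_lt k (Real.one_lt_exp_iff.2 hε)).comp
    (tendsto_add_atTop_nat 1)
  filter_upwards [hdecay.eventually (gt_mem_nhds (inv_pos.2 (Real.exp_pos ε)))] with n hn
  simp only [Function.comp_apply, Nat.cast_add, Nat.cast_one] at hn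
  rw [div_lt_iff₀ (by positivity), pow_succ, mul_comm,
    mul_inv_cancel_right₀ (Real.exp_pos ε).ne'] at hn
  rwa [mul_comm, Real.exp_nat_mul]

theorem eventually_mul_lt_nhdsGT_zero (c : ℝ) {d : ℝ} (hd : 0 < d) :
    ∀ᶠ θ in 𝓝[>] (0 : ℝ), θ * c < d :=
  nhdsWithin_le_nhds (((continuous_mul_const c).tendsto 0).eventually_lt_const (by simpa))

noncomputable def largeIndices (m n : ℕ) (ε : ℝ) (z : Fin m → ℂ) : Finset (Fin m → ℕ) :=
  (Fintype.piFinset fun _ : Fin m => range (n + 1)).filter fun J => ∑ i, J i ≤ n ∧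
    (1 + ∑ i, ‖z i‖ ^ 2) ^ ((n : ℝ) / 2) * Real.exp (-ε * n) <
      Real.sqrt (multiCoeff m n J) * ∏ i, ‖z i‖ ^ J i

theorem floor_pow_le_card_largeIndices {m n : ℕ} {z : Fin m → ℂ} (hz : ∀ i, z i ≠ 0) {ε θ : ℝ}
    (hε : 0 ≤ ε) (hθm : θ * (m * (1 + ∑ i, ‖z i‖ ^ 2)) ≤ 1)
    (hθz : ∀ i, θ * (1 + ∑ i, ‖z i‖ ^ 2) ≤ (Real.exp ε - 1) * ‖z i‖ ^ 2)
    (hgrowth : ((n : ℝ) + 1) ^ (m + 1) < Real.exp (ε * n)) :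
    ⌊θ * n⌋₊ ^ m ≤ #(largeIndices m n ε z) := by
  set R := 1 + ∑ i, ‖z i‖ ^ 2
  have hR : 0 < R := by positivity
  have hz2 : ∀ i, 0 ≤ ‖z i‖ ^ 2 := fun i => sq_nonneg _
  calc ⌊θ * n⌋₊ ^ m = #(Fintype.piFinset fun i =>
        Ico ⌈n * ‖z i‖ ^ 2 / R⌉₊ (⌈n * ‖z i‖ ^ 2 / R⌉₊ + ⌊θ * n⌋₊)) := by simp
    _ ≤ #(largeIndices m n ε z) := card_le_card fun J hJ => by
      have hJbounds := fun i =>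
        le_and_le_add_of_mem_Ico_ceil (by positivity) (Fintype.mem_piFinset.1 hJ i)
      have hup : ∀ i, J i * R ≤ n * ‖z i‖ ^ 2 + θ * n * R := fun i => by
        have := mul_le_mul_of_nonneg_right (hJbounds i).2 hR.le
        rwa [add_mul, div_mul_cancel₀ _ hR.ne'] at this
      obtain ⟨hJ, hrest⟩ := sum_le_and_sub_sum_mul_le hz2
        (fun i => (div_le_iff₀ hR).1 (hJbounds i).1) hup (by nlinarith)
      refine mem_filter.2 ⟨Fintype.mem_piFinset.2 fun i => mem_range.2 (Nat.lt_succ_of_le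
        ((single_le_sum (fun j _ => Nat.zero_le (J j)) (mem_univ i)).trans hJ)), hJ,
        rpow_mul_exp_lt_sqrt_multiCoeff_mul_prod hz hJ ?_ (fun i => (hup i).trans ?_) hgrowth⟩
      · exact hrest.trans (le_mul_of_one_le_left n.cast_nonneg (Real.one_le_exp hε))
      · nlinarith [hθz i]

theorem stmt_8_general (m : ℕ) :
    ∀ ε > (0 : ℝ), ∀ z : Fin m → ℂ, (∀ i, z i ≠ 0) →
      ∃ δ > (0 : ℝ), ∃ N : ℕ, ∀ n ≥ N,
        δ * (Nat.choose (n + m) m : ℝ) ≤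
          ((((Fintype.piFinset fun _ : Fin m => Finset.range (n + 1)).filter
              (fun J => ∑ i, J i ≤ n ∧
                (1 + ∑ i, ‖z i‖ ^ 2) ^ ((n : ℝ) / 2) * Real.exp (-ε * n) <
                  Real.sqrt (multiCoeff m n J) * ∏ i, ‖z i‖ ^ J i)).card : ℕ) :
            ℝ) := by
  intro ε hε z hz
  have hgap : ∀ i, 0 < (Real.exp ε - 1) * ‖z i‖ ^ 2 := fun i =>
    mul_pos (by linarith [Real.add_one_lt_exp hε.ne']) (pow_pos (norm_pos_iff.2 (hz i)) 2)
  obtain ⟨θ, hθm, hθz, hθ⟩ := ((eventually_mul_lt_nhdsGT_zero _ one_pos).and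
    ((eventually_all.2 fun i => eventually_mul_lt_nhdsGT_zero _ (hgap i)).and
      self_mem_nhdsWithin)).exists
  obtain ⟨N, hN⟩ := eventually_atTop.1 ((eventually_add_one_pow_lt_exp_mul (m + 1) hε).and
    (((tendsto_natCast_atTop_atTop.const_mul_atTop hθ).eventually_ge_atTop 2).and
      (eventually_ge_atTop m)))
  refine ⟨(θ / 4) ^ m, by positivity, N, fun n hn => ?_⟩
  obtain ⟨hgrowth, hθn, hmn⟩ := hN n hn
  calc (θ / 4) ^ m * ((n + m).choose m : ℝ) ≤ (⌊θ * n⌋₊ : ℝ) ^ m :=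
        pow_mul_choose_le_floor_pow hmn hθn
    _ ≤ #(largeIndices m n ε z) := by
        exact_mod_cast floor_pow_le_card_largeIndices hz hε.le hθm.le (fun i => (hθz i).le)
          hgrowth

/-- Elliptic analogue of Lemma 3.1: for every `ε > 0` and `z ∈ (ℂ*)^m`, a positive
proportion (`≥ δ · binom(n+m,m)`) of the multi-indices `|J| ≤ n` satisfy
`C(n,J)^{1/2} |z^J| > (1+‖z‖²)^{n/2} e^{-εn}` for all large `n`. -/
theorem stmt_8 (m : ℕ) (hm : 1 ≤ m) :
    ∀ ε > (0 : ℝ), ∀ z : Fin m → ℂ, (∀ i, z i ≠ 0) →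
      ∃ δ > (0 : ℝ), ∃ N : ℕ, ∀ n ≥ N,
        δ * (Nat.choose (n + m) m : ℝ) ≤
          ((((Fintype.piFinset fun _ : Fin m => Finset.range (n + 1)).filter
              (fun J => ∑ i, J i ≤ n ∧
                (1 + ∑ i, ‖z i‖ ^ 2) ^ ((n : ℝ) / 2) * Real.exp (-ε * n) <
                  Real.sqrt (multiCoeff m n J) * ∏ i, ‖z i‖ ^ J i)).card : ℕ) :
            ℝ) :=
  stmt_8_general m
end
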